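/- Let G = K_{n_1,...,n_k} be a complete k-partite graph, and let m ≥ 0 be the number of partite sets of cardinality 1 (equivalently, the number of full vertices of G). Then IC(G) = 2k − m. -/

import Mathlib

namespace ICNL

variable {V : Type*}

/-- `S` is a dominating set of `G`. -/
def Dominating (G : SimpleGraph V) (S : Set V) : Prop :=
  ∀ v : V, v ∈ S ∨ ∃ u ∈ S, G.Adj u v

/-- `S` is an independent set of `G`. -/
def IndepSet (G : SimpleGraph V) (S : Set V) : Prop :=
  ∀ ⦃u : V⦄, u ∈ S → ∀ ⦃v : V⦄, v ∈ S → ¬ G.Adj u v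

/-- `S` is an independent dominating set of `G`. -/
def IndepDom (G : SimpleGraph V) (S : Set V) : Prop :=
  IndepSet G S ∧ Dominating G S

/-- `A` and `B` form an independent coalition in `G`. -/
def ICCoalition (G : SimpleGraph V) (A B : Set V) : Prop :=
  Disjoint A B ∧ IndepSet G A ∧ IndepSet G B ∧
    ¬ IndepDom G A ∧ ¬ IndepDom G B ∧ IndepDom G (A ∪ B)

/-- `π` is a partition of the vertex set into nonempty classes. -/
def IsPartition (π : Finset (Finset V)) : Prop :=
  (∀ A ∈ π, A.Nonempty) ∧ ∀ v : V, ∃! A : Finset V, A ∈ π ∧ v ∈ A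

/-- `π` is an independent coalition partition of `G`. -/
def IsICPartition (G : SimpleGraph V) (π : Finset (Finset V)) : Prop :=
  IsPartition π ∧
    ∀ A ∈ π, (∃ v : V, (A : Set V) = {v} ∧ Dominating G (A : Set V)) ∨
      (¬ IndepDom G (A : Set V) ∧
        ∃ B ∈ π, B ≠ A ∧ ICCoalition G (A : Set V) (B : Set V))

/-- The independent coalition number: the maximum number of classes of an
ic-partition of `G`. -/
noncomputable def IC (G : SimpleGraph V) : ℕ :=
  sSup {k | ∃ π : Finset (Finset V), IsICPartition G π ∧ π.card = k}

/-! When every part is nonempty, the independent dominating sets of a complete multipartite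
graph are exactly its partite sets. Each class of an ic-partition is independent, hence lies
in a single part. A part of size one contains exactly one class. A larger part contains no
dominating singleton, so the class of any of its vertices has a coalition partner, and the
union of the two is an independent dominating set containing that vertex, i.e. the whole part;
so the part consists of exactly these two classes. Hence every ic-partition has exactly
`2k - m` classes, and splitting each larger part into one vertex and the rest gives one. -/

section Partition

open Finset

variable {G : SimpleGraph V} {π : Finset (Finset V)} {A B : Finset V}

theorem IsPartition.eq_of_mem (hπ : IsPartition π) (hA : A ∈ π) (hB : B ∈ π) {v : V}
    (hvA : v ∈ A) (hvB : v ∈ B) : A = B :=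
  (hπ.2 v).unique ⟨hA, hvA⟩ ⟨hB, hvB⟩

theorem isPartition_image [Fintype V] [DecidableEq V] {c : V → Finset V}
    (hmem : ∀ v, v ∈ c v) (hc : ∀ v w, v ∈ c w → c w = c v) :
    IsPartition (univ.image c) := by
  refine ⟨?_, fun v => ⟨c v, ⟨mem_image_of_mem c (mem_univ v), hmem v⟩, ?_⟩⟩
  · simp only [mem_image, mem_univ, true_and, forall_exists_index, forall_apply_eq_imp_iff]
    exact fun v => ⟨v, hmem v⟩
  · rintro _ ⟨hA, hvA⟩
    obtain ⟨w, -, rfl⟩ := mem_image.1 hA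
    exact hc v w hvA

theorem IsICPartition.indepSet (hπ : IsICPartition G π) (hA : A ∈ π) : IndepSet G A := by
  rcases hπ.2 A hA with ⟨v, hv, -⟩ | ⟨-, B, -, -, hc⟩
  · rw [hv]
    rintro u rfl w rfl
    exact G.irrefl
  · exact hc.2.1

theorem ICCoalition.symm {A B : Set V} (h : ICCoalition G A B) : ICCoalition G B A :=
  ⟨h.1.symm, h.2.2.1, h.2.1, h.2.2.2.2.1, h.2.2.2.1, Set.union_comm A B ▸ h.2.2.2.2.2⟩

theorem ICCoalition.ne {A B : Set V} (h : ICCoalition G A B) : A ≠ B := by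
  rintro rfl
  exact h.2.2.2.1 (Set.union_self A ▸ h.2.2.2.2.2)

theorem IC_eq_of_forall_card_eq {N : ℕ} (hex : ∃ π, IsICPartition G π)
    (hcard : ∀ π, IsICPartition G π → π.card = N) : IC G = N := by
  obtain ⟨π, hπ⟩ := hex
  have : {k | ∃ π, IsICPartition G π ∧ π.card = k} = {N} := by
    ext k
    constructor
    · rintro ⟨π', hπ', rfl⟩
      exact hcard π' hπ'
    · rintro rfl
      exact ⟨π, hπ, hcard π hπ⟩
  rw [IC, this, csSup_singleton]

end Partition

section CompleteMultipartite

open SimpleGraph Finset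

variable {ι : Type*} {W : ι → Type*} {S A B : Set (Σ i, W i)}

def partiteSet (W : ι → Type*) (i : ι) : Set (Σ i, W i) := {v | v.1 = i}

theorem indepSet_of_subset_partiteSet {i : ι} (h : S ⊆ partiteSet W i) :
    IndepSet (completeMultipartiteGraph W) S :=
  fun _ hu _ hv hadj => hadj ((h hu).trans (h hv).symm)

theorem IndepSet.subset_partiteSet (h : IndepSet (completeMultipartiteGraph W) S)
    {v : Σ i, W i} (hv : v ∈ S) : S ⊆ partiteSet W v.1 :=
  fun _ hu => not_not.1 (h hu hv)

theorem indepDom_partiteSet [∀ i, Nonempty (W i)] (i : ι) :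
    IndepDom (completeMultipartiteGraph W) (partiteSet W i) := by
  refine ⟨indepSet_of_subset_partiteSet subset_rfl, fun v => ?_⟩
  by_cases hv : v.1 = i
  · exact Or.inl hv
  · exact Or.inr ⟨⟨i, Classical.arbitrary _⟩, rfl, Ne.symm hv⟩

theorem IndepDom.eq_partiteSet (h : IndepDom (completeMultipartiteGraph W) S)
    {v : Σ i, W i} (hv : v ∈ S) : S = partiteSet W v.1 := by
  refine (h.1.subset_partiteSet hv).antisymm fun w hw => ?_
  rcases h.2 w with hwS | ⟨u, huS, hadj⟩
  · exact hwS
  · exact absurd ((h.1.subset_partiteSet hv huS).trans hw.symm) hadj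

theorem not_dominating_of_subset_partiteSet {i : ι} (hA : A ⊆ partiteSet W i)
    {b : Σ i, W i} (hb : b ∈ partiteSet W i) (hbA : b ∉ A) :
    ¬ Dominating (completeMultipartiteGraph W) A := by
  intro hdom
  rcases hdom b with hbA' | ⟨a, ha, hab⟩
  · exact hbA hbA'
  · exact hab ((hA ha).trans hb.symm)

theorem icCoalition_of_union_eq_partiteSet [∀ i, Nonempty (W i)] {i : ι} (hA : A.Nonempty)
    (hB : B.Nonempty) (hAB : Disjoint A B) (h : A ∪ B = partiteSet W i) :
    ICCoalition (completeMultipartiteGraph W) A B := by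
  have hAi : A ⊆ partiteSet W i := h ▸ Set.subset_union_left
  have hBi : B ⊆ partiteSet W i := h ▸ Set.subset_union_right
  obtain ⟨a, ha⟩ := hA
  obtain ⟨b, hb⟩ := hB
  refine ⟨hAB, indepSet_of_subset_partiteSet hAi, indepSet_of_subset_partiteSet hBi,
    fun hdom => ?_, fun hdom => ?_, h ▸ indepDom_partiteSet i⟩
  · exact not_dominating_of_subset_partiteSet hAi (hBi hb) (hAB.notMem_of_mem_right hb) hdom.2
  · exact not_dominating_of_subset_partiteSet hBi (hAi ha) (hAB.notMem_of_mem_left ha) hdom.2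

theorem eq_of_fst_eq_of_subsingleton {i : ι} [Subsingleton (W i)] {v w : Σ i, W i}
    (hv : v.1 = i) (hw : w.1 = i) : v = w := by
  obtain ⟨_, x⟩ := v
  obtain ⟨_, y⟩ := w
  subst hv hw
  rw [Subsingleton.elim x y]

variable [DecidableEq ι] {π : Finset (Finset (Σ i, W i))}

def classesIn (π : Finset (Finset (Σ i, W i))) (i : ι) : Finset (Finset (Σ i, W i)) :=
  π.filter fun A => ∀ v ∈ A, v.1 = i

theorem mem_classesIn {i : ι} {A : Finset (Σ i, W i)} :
    A ∈ classesIn π i ↔ A ∈ π ∧ ∀ v ∈ A, v.1 = i :=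
  mem_filter

theorem IsICPartition.card_classesIn_of_subsingleton {i : ι} [Nonempty (W i)]
    [Subsingleton (W i)] (hπ : IsICPartition (completeMultipartiteGraph W) π) :
    #(classesIn π i) = 1 := by
  obtain ⟨A, ⟨hA, hvA⟩, -⟩ := hπ.1.2 ⟨i, Classical.arbitrary _⟩
  refine card_eq_one.2 ⟨A, ext fun C => ?_⟩
  rw [mem_classesIn, mem_singleton]
  constructor
  · rintro ⟨hC, hCi⟩
    obtain ⟨w, hw⟩ := hπ.1.1 C hC
    have hw' : w = ⟨i, Classical.arbitrary _⟩ := eq_of_fst_eq_of_subsingleton (hCi w hw) rfl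
    exact hπ.1.eq_of_mem hC hA hw (hw' ▸ hvA)
  · rintro rfl
    exact ⟨hA, fun v hv => (hπ.indepSet hA).subset_partiteSet hvA hv⟩

theorem IsICPartition.card_classesIn_of_nontrivial {i : ι} [Nontrivial (W i)]
    (hπ : IsICPartition (completeMultipartiteGraph W) π) : #(classesIn π i) = 2 := by
  classical
  obtain ⟨x, y, hxy⟩ := exists_pair_ne (W i)
  obtain ⟨A, ⟨hA, hxA⟩, -⟩ := hπ.1.2 ⟨i, x⟩
  rcases hπ.2 A hA with ⟨u, hAu, hdom⟩ | ⟨-, B, hB, hBA, hc⟩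
  · have hx : (⟨i, x⟩ : Σ i, W i) = u := Set.mem_singleton_iff.1 (hAu ▸ mem_coe.2 hxA)
    have hyA : (⟨i, y⟩ : Σ i, W i) ∉ (A : Set _) := fun hyA =>
      hxy (sigma_mk_injective (hx.trans (Set.mem_singleton_iff.1 (hAu ▸ hyA)).symm))
    exact absurd hdom <| not_dominating_of_subset_partiteSet
      ((hπ.indepSet hA).subset_partiteSet hxA) (b := ⟨i, y⟩) rfl hyA
  · have hAB : (A : Set _) ∪ B = partiteSet W i := hc.2.2.2.2.2.eq_partiteSet (Or.inl hxA)
    rw [← card_pair hBA.symm]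
    congr 1
    ext C
    rw [mem_classesIn, mem_insert, mem_singleton]
    constructor
    · rintro ⟨hC, hCi⟩
      obtain ⟨w, hw⟩ := hπ.1.1 C hC
      rcases (hAB.symm ▸ hCi w hw : w ∈ (A : Set _) ∪ B) with hwA | hwB
      · exact Or.inl (hπ.1.eq_of_mem hC hA hw hwA)
      · exact Or.inr (hπ.1.eq_of_mem hC hB hw hwB)
    · rintro (rfl | rfl)
      · exact ⟨hA, fun v hv => hAB.subset (Or.inl hv)⟩
      · exact ⟨hB, fun v hv => hAB.subset (Or.inr hv)⟩

theorem IsICPartition.card_eq_sum [Fintype ι] [∀ i, Fintype (W i)] [∀ i, Nonempty (W i)]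
    (hπ : IsICPartition (completeMultipartiteGraph W) π) :
    #π = ∑ i, if Fintype.card (W i) = 1 then 1 else 2 := by
  have hdisj : ((univ : Finset ι) : Set ι).PairwiseDisjoint (classesIn π) := by
    intro i _ j _ hij
    refine disjoint_left.2 fun A hAi hAj => ?_
    obtain ⟨v, hv⟩ := hπ.1.1 A (mem_classesIn.1 hAi).1
    exact hij (((mem_classesIn.1 hAi).2 v hv).symm.trans ((mem_classesIn.1 hAj).2 v hv))
  have hfibres : π = univ.disjiUnion (classesIn π) hdisj := by
    ext A
    simp only [mem_disjiUnion, mem_univ, mem_classesIn, true_and]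
    refine ⟨fun hA => ?_, fun ⟨_, hA, _⟩ => hA⟩
    obtain ⟨v, hv⟩ := hπ.1.1 A hA
    exact ⟨v.1, hA, fun w hw => (hπ.indepSet hA).subset_partiteSet hv hw⟩
  rw [hfibres, card_disjiUnion]
  refine sum_congr rfl fun i _ => ?_
  split_ifs with h
  · have := Fintype.card_le_one_iff_subsingleton.1 h.le
    exact hπ.card_classesIn_of_subsingleton
  · have := Fintype.one_lt_card_iff_nontrivial.1 (lt_of_le_of_ne Fintype.card_pos (Ne.symm h))
    exact hπ.card_classesIn_of_nontrivial

variable [Fintype ι] [∀ i, Fintype (W i)] [∀ i, DecidableEq (W i)]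

def splitClass (x : ∀ i, W i) (v : Σ i, W i) : Finset (Σ i, W i) :=
  if v.2 = x v.1 then {v} else univ.filter fun w => w.1 = v.1 ∧ w.2 ≠ x w.1

theorem splitClass_of_eq {x : ∀ i, W i} {v : Σ i, W i} (h : v.2 = x v.1) :
    splitClass x v = {v} :=
  if_pos h

theorem coe_splitClass_of_ne {x : ∀ i, W i} {v : Σ i, W i} (h : v.2 ≠ x v.1) :
    (splitClass x v : Set (Σ i, W i)) = partiteSet W v.1 \ {⟨v.1, x v.1⟩} := by
  ext w
  simp only [splitClass, if_neg h, coe_filter, mem_univ, true_and, Set.mem_ofPred_eq,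
    Set.mem_sdiff, Set.mem_singleton_iff, partiteSet]
  obtain ⟨j, y⟩ := w
  constructor <;> rintro ⟨rfl, hne⟩ <;> simp_all

theorem mem_splitClass_self (x : ∀ i, W i) (v : Σ i, W i) : v ∈ splitClass x v := by
  by_cases h : v.2 = x v.1
  · simp [splitClass_of_eq h]
  · simp [splitClass, h]

theorem splitClass_eq_of_mem {x : ∀ i, W i} {v w : Σ i, W i} (hv : v ∈ splitClass x w) :
    splitClass x w = splitClass x v := by
  by_cases hw : w.2 = x w.1
  · rw [splitClass_of_eq hw, mem_singleton] at hv
    rw [hv]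
  · simp only [splitClass, if_neg hw, mem_filter, mem_univ, true_and] at hv ⊢
    rw [if_neg hv.2, hv.1]

def splitPartition (x : ∀ i, W i) : Finset (Finset (Σ i, W i)) :=
  univ.image (splitClass x)

theorem isICPartition_splitPartition (x : ∀ i, W i) :
    IsICPartition (completeMultipartiteGraph W) (splitPartition x) := by
  have : ∀ i, Nonempty (W i) := fun i => ⟨x i⟩
  refine ⟨isPartition_image (mem_splitClass_self x) fun v w => splitClass_eq_of_mem, ?_⟩
  simp only [splitPartition, mem_image, mem_univ, true_and, forall_exists_index,
    forall_apply_eq_imp_iff]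
  rintro ⟨i, a⟩
  rcases subsingleton_or_nontrivial (W i) with hW | hW
  · have hpart : ({⟨i, a⟩} : Set (Σ i, W i)) = partiteSet W i :=
      Set.ext fun w => ⟨by rintro rfl; rfl, fun hw => eq_of_fst_eq_of_subsingleton hw rfl⟩
    rw [splitClass_of_eq (Subsingleton.elim a (x i)), coe_singleton]
    exact Or.inl ⟨_, rfl, hpart ▸ (indepDom_partiteSet i).2⟩
  · obtain ⟨y, hy⟩ := exists_ne (x i)
    have hc : ICCoalition (completeMultipartiteGraph W) (splitClass x ⟨i, x i⟩ : Set _)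
        (splitClass x ⟨i, y⟩ : Set _) := by
      rw [splitClass_of_eq rfl, coe_splitClass_of_ne hy, coe_singleton]
      exact icCoalition_of_union_eq_partiteSet (Set.singleton_nonempty _)
        ⟨⟨i, y⟩, rfl, by simpa⟩ Set.disjoint_sdiff_right
        (Set.union_sdiff_cancel (Set.singleton_subset_iff.2 rfl))
    right
    by_cases ha : a = x i
    · subst ha
      exact ⟨hc.2.2.2.1, _, ⟨_, rfl⟩, fun h => hc.ne (congrArg _ h.symm), hc⟩
    · rw [← splitClass_eq_of_mem (w := ⟨i, y⟩) (by simp [splitClass, hy, ha])]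
      exact ⟨hc.2.2.2.2.1, _, ⟨_, rfl⟩, fun h => hc.ne (congrArg _ h), hc.symm⟩

end CompleteMultipartite

open Finset in
theorem IC_completeMultipartiteGraph {ι : Type*} [Fintype ι] {W : ι → Type*}
    [∀ i, Fintype (W i)] [∀ i, Nonempty (W i)] :
    IC (SimpleGraph.completeMultipartiteGraph W) =
      ∑ i, if Fintype.card (W i) = 1 then 1 else 2 := by
  classical
  exact IC_eq_of_forall_card_eq ⟨_, isICPartition_splitPartition fun _ => Classical.arbitrary _⟩
    fun _ hπ => hπ.card_eq_sum

theorem stmt_8 (k : ℕ) (n : Fin k → ℕ) (hn : ∀ i, 1 ≤ n i) (m : ℕ)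
    (hm : m = (Finset.univ.filter fun i => n i = 1).card) :
    IC (SimpleGraph.completeMultipartiteGraph fun i => Fin (n i)) = 2 * k - m := by
  have : ∀ i, Nonempty (Fin (n i)) := fun i => ⟨⟨0, hn i⟩⟩
  have hsplit := Finset.card_filter_add_card_filter_not (s := Finset.univ) fun i => n i = 1
  rw [IC_completeMultipartiteGraph, hm, Finset.sum_ite]
  simp only [Fintype.card_fin, Finset.sum_const, smul_eq_mul, Finset.card_univ] at hsplit ⊢
  omega

end ICNL
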